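/- Let G be a graph on vertex set {v₁,...,vₙ} with a Hamiltonian cycle C and minimum degree at least 3, with m edges. Let G' be obtained from G by replacing each edge uv ∉ E(C) with a path u–w–v through a new vertex w of degree 2 while also keeping the edge uv (i.e., G' = T(G - E(C)) + E(C), the triangulation of G - E(C) plus the cycle edges). Define f on E(G') by f(e) = 1 if e ∈ E(G) and f(e) = -1 otherwise. Then f is a signed edge domination function of G' with total weight f(G') = 2n - m = 2|V(G')| - |E(G')|. -/

import Mathlib

/-!
Every edge of `G` off the Hamiltonian cycle `C` contributes one new vertex and two `-1` edges
at its endpoints, so an original vertex `v` sees `deg v` edges of weight `+1` and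
`deg v - 2` of weight `-1`: its weight is `2`. A new vertex sees two `-1` edges: weight `-2`.
Hence an original edge has closed-neighbourhood sum `2 + 2 - 1 = 3` and a new edge
`2 - 2 + 1 = 1`. Summing vertex weights counts every edge twice, so
`2 f(G') = 2n - 2|E'|`, and `|E'| = m - n` because the cycle has `n` edges. The same count
with `f ≡ 1` gives `|E(G')| = m + 2|E'|`.
-/

open Finset

open scoped Classical

/-- The weight of a vertex `v`: the sum of `f` over the edges of `G` incident to `v`. -/
noncomputable def vweight {V : Type*} [Fintype V] [DecidableEq V]
    (G : SimpleGraph V) (f : Sym2 V → ℤ) (v : V) : ℤ :=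
  ∑ e ∈ G.incidenceFinset v, f e

/-- `f` is a signed edge domination function of `G`: it takes values in `{1,-1}` on the
edges and for each edge `e = uv`, `∑_{e' ∈ N[e]} f e' = f(u) + f(v) - f(e) ≥ 1`. -/
noncomputable def IsSEDF {V : Type*} [Fintype V] [DecidableEq V]
    (G : SimpleGraph V) (f : Sym2 V → ℤ) : Prop :=
  (∀ e ∈ G.edgeFinset, f e = 1 ∨ f e = -1) ∧
  ∀ ⦃u v⦄, G.Adj u v → 1 ≤ vweight G f u + vweight G f v - f s(u, v)

/-- `f ∈ SEDF⁰(G)`: `f` takes values in `{1,-1}` on the edges, every vertex has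
nonnegative weight, and both endpoints of any positive edge have weights summing to ≥ 2. -/
noncomputable def IsSEDF0 {V : Type*} [Fintype V] [DecidableEq V]
    (G : SimpleGraph V) (f : Sym2 V → ℤ) : Prop :=
  (∀ e ∈ G.edgeFinset, f e = 1 ∨ f e = -1) ∧
  (∀ v, 0 ≤ vweight G f v) ∧
  ∀ ⦃u v⦄, G.Adj u v → f s(u, v) = 1 → 2 ≤ vweight G f u + vweight G f v

lemma Sym2.card_filter_mem_of_not_isDiag {α : Type*} [Fintype α] [DecidableEq α] {e : Sym2 α}
    (he : ¬e.IsDiag) : #{a | a ∈ e} = 2 := by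
  rw [← Sym2.card_toFinset_of_not_isDiag e he]
  congr 1
  ext
  simp

section

open SimpleGraph Sum

lemma card_edgeFinset_of_degree_eq_two {V : Type*} [Fintype V] (C : SimpleGraph V)
    (hC2 : ∀ v, C.degree v = 2) : #C.edgeFinset = Fintype.card V := by
  have h := C.sum_degrees_eq_twice_card_edges
  simp only [hC2, sum_const, card_univ, smul_eq_mul] at h
  omega

variable {V : Type*} [Fintype V] [DecidableEq V]

lemma vweight_eq_sum_neighborFinset (G : SimpleGraph V) (f : Sym2 V → ℤ) (v : V) :
    vweight G f v = ∑ w ∈ G.neighborFinset v, f s(v, w) := by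
  have himage : G.incidenceFinset v = (G.neighborFinset v).image (s(v, ·)) := by
    ext e
    simp only [mem_incidenceFinset, mem_image, mem_neighborFinset]
    constructor
    · rintro ⟨he, hv⟩
      refine ⟨Sym2.Mem.other hv, ?_, Sym2.other_spec hv⟩
      rwa [← mem_edgeSet, Sym2.other_spec hv]
    · rintro ⟨w, hw, rfl⟩
      exact ⟨hw, Sym2.mem_mk_left v w⟩
  rw [vweight, himage, sum_image fun _ _ _ _ h => Sym2.congr_right.mp h]

lemma sum_vweight (G : SimpleGraph V) (f : Sym2 V → ℤ) :
    ∑ v, vweight G f v = 2 * ∑ e ∈ G.edgeFinset, f e := by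
  simp_rw [vweight, incidenceFinset_eq_filter, sum_filter]
  rw [sum_comm, mul_sum]
  refine sum_congr rfl fun e he => ?_
  rw [← sum_filter, sum_const, nsmul_eq_mul,
    Sym2.card_filter_mem_of_not_isDiag (G.not_isDiag_of_mem_edgeSet (mem_edgeFinset.mp he))]
  simp

section OffCycle

variable {E' : Type*} [Fintype E'] {G C : SimpleGraph V} {ι : E' → Sym2 V}

lemma image_eq_edgeFinset_sdiff (hmem : ∀ x, ι x ∈ G.edgeSet ∧ ι x ∉ C.edgeSet)
    (hsurj : ∀ e, e ∈ G.edgeSet → e ∉ C.edgeSet → ∃ x, ι x = e) :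
    univ.image ι = G.edgeFinset \ C.edgeFinset := by
  ext e
  simp only [mem_image, mem_univ, true_and, mem_sdiff, mem_edgeFinset]
  constructor
  · rintro ⟨x, rfl⟩
    exact hmem x
  · rintro ⟨hG, hC⟩
    exact hsurj e hG hC

lemma card_add_card_edgeFinset (hCG : C ≤ G) (hinj : Function.Injective ι)
    (hmem : ∀ x, ι x ∈ G.edgeSet ∧ ι x ∉ C.edgeSet)
    (hsurj : ∀ e, e ∈ G.edgeSet → e ∉ C.edgeSet → ∃ x, ι x = e) :
    Fintype.card E' + #C.edgeFinset = #G.edgeFinset := by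
  rw [← card_sdiff_add_card_eq_card (edgeFinset_mono hCG), ← image_eq_edgeFinset_sdiff hmem hsurj,
    card_image_of_injective _ hinj, card_univ]

lemma card_filter_mem_add_degree (hCG : C ≤ G) (hinj : Function.Injective ι)
    (hmem : ∀ x, ι x ∈ G.edgeSet ∧ ι x ∉ C.edgeSet)
    (hsurj : ∀ e, e ∈ G.edgeSet → e ∉ C.edgeSet → ∃ x, ι x = e) (v : V) :
    #{x | v ∈ ι x} + C.degree v = G.degree v := by
  have hsub : C.incidenceFinset v ⊆ G.incidenceFinset v := by
    simp_rw [incidenceFinset_eq_filter]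
    exact filter_subset_filter _ (edgeFinset_mono hCG)
  have himage : ({x | v ∈ ι x} : Finset E').image ι = G.incidenceFinset v \ C.incidenceFinset v := by
    ext e
    simp only [mem_image, mem_filter, mem_univ, true_and, mem_sdiff, mem_incidenceFinset,
      incidenceSet, Set.mem_ofPred_eq]
    constructor
    · rintro ⟨x, hx, rfl⟩
      exact ⟨⟨(hmem x).1, hx⟩, fun h => (hmem x).2 h.1⟩
    · rintro ⟨⟨hG, hv⟩, hC⟩
      obtain ⟨x, rfl⟩ := hsurj e hG fun h => hC ⟨h, hv⟩
      exact ⟨x, hv, rfl⟩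
  rw [← card_image_of_injective _ hinj, himage, ← card_incidenceFinset_eq_degree,
    ← card_incidenceFinset_eq_degree, card_sdiff_add_card_eq_card hsub]

end OffCycle

/-- When `ι` enumerates `E(G) \ E(C)`, this says that `G'` is the paper's `T(G - E(C)) + E(C)`. -/
structure IsTriangulation {E' : Type*} (G : SimpleGraph V) (ι : E' → Sym2 V)
    (G' : SimpleGraph (V ⊕ E')) : Prop where
  adj_inl_inl : ∀ u v : V, G'.Adj (inl u) (inl v) ↔ G.Adj u v
  adj_inl_inr : ∀ (u : V) (x : E'), G'.Adj (inl u) (inr x) ↔ u ∈ ι x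
  not_adj_inr_inr : ∀ x y : E', ¬ G'.Adj (inr x) (inr y)

namespace IsTriangulation

variable {E' : Type*} [Fintype E'] {G : SimpleGraph V} {ι : E' → Sym2 V}
  {G' : SimpleGraph (V ⊕ E')} (hT : IsTriangulation G ι G')
include hT

lemma neighborFinset_inl (v : V) :
    G'.neighborFinset (inl v) = (G.neighborFinset v).disjSum {x | v ∈ ι x} := by
  ext (u | x) <;> simp [hT.adj_inl_inl, hT.adj_inl_inr]

lemma neighborFinset_inr (x : E') : G'.neighborFinset (inr x) = (ι x).toFinset.disjSum ∅ := by
  ext (u | y) <;> simp [G'.adj_comm _ (inl _), hT.adj_inl_inr, hT.not_adj_inr_inr]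

lemma degree_inl (v : V) : G'.degree (inl v) = G.degree v + #{x | v ∈ ι x} := by
  rw [← card_neighborFinset_eq_degree, hT.neighborFinset_inl, card_disjSum,
    card_neighborFinset_eq_degree]

lemma degree_inr {x : E'} (hx : ¬(ι x).IsDiag) : G'.degree (inr x) = 2 := by
  rw [← card_neighborFinset_eq_degree, hT.neighborFinset_inr, card_disjSum,
    Sym2.card_toFinset_of_not_isDiag _ hx, card_empty]

lemma card_edgeFinset (hι : ∀ x, ¬(ι x).IsDiag) :
    #G'.edgeFinset = #G.edgeFinset + 2 * Fintype.card E' := by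
  have hincidences : ∑ v, #{x | v ∈ ι x} = 2 * Fintype.card E' :=
    calc ∑ v, #{x | v ∈ ι x} = ∑ x, #{v | v ∈ ι x} :=
          sum_card_bipartiteAbove_eq_sum_card_bipartiteBelow _
      _ = ∑ _x : E', 2 := sum_congr rfl fun x _ => Sym2.card_filter_mem_of_not_isDiag (hι x)
      _ = 2 * Fintype.card E' := by simp [mul_comm]
  have h := G'.sum_degrees_eq_twice_card_edges
  simp only [Fintype.sum_sum_type, hT.degree_inl, hT.degree_inr (hι _), sum_add_distrib,
    G.sum_degrees_eq_twice_card_edges, hincidences, sum_const, card_univ, smul_eq_mul] at h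
  omega

variable [DecidableEq E'] {f : Sym2 (V ⊕ E') → ℤ}

lemma vweight_inl (hf1 : ∀ u v : V, G.Adj u v → f s(inl u, inl v) = 1)
    (hf2 : ∀ (u : V) (x : E'), u ∈ ι x → f s(inl u, inr x) = -1) (v : V) :
    vweight G' f (inl v) = G.degree v - #{x | v ∈ ι x} := by
  rw [vweight_eq_sum_neighborFinset, hT.neighborFinset_inl, sum_disjSum,
    sum_congr rfl fun u hu => hf1 v u ((mem_neighborFinset _ _ _).mp hu),
    sum_congr rfl fun x hx => hf2 v x (mem_filter.mp hx).2]
  simp [sub_eq_add_neg]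

lemma vweight_inr (hf2 : ∀ (u : V) (x : E'), u ∈ ι x → f s(inl u, inr x) = -1)
    {x : E'} (hx : ¬(ι x).IsDiag) : vweight G' f (inr x) = -2 := by
  rw [vweight_eq_sum_neighborFinset, hT.neighborFinset_inr, sum_disjSum,
    sum_congr rfl fun u hu => Sym2.eq_swap ▸ hf2 u x (Sym2.mem_toFinset.mp hu)]
  simp [Sym2.card_toFinset_of_not_isDiag _ hx]

lemma isSEDF_of_vweight (hf1 : ∀ u v : V, G.Adj u v → f s(inl u, inl v) = 1)
    (hf2 : ∀ (u : V) (x : E'), u ∈ ι x → f s(inl u, inr x) = -1)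
    (hV : ∀ v, vweight G' f (inl v) = 2)
    (hE : ∀ x, vweight G' f (inr x) = -2) : IsSEDF G' f := by
  have hf2' : ∀ (x : E') (u : V), G'.Adj (inr x) (inl u) → f s(inr x, inl u) = -1 :=
    fun x u h => by rw [Sym2.eq_swap, hf2 u x ((hT.adj_inl_inr u x).mp h.symm)]
  refine ⟨fun e he => ?_, fun a b hab => ?_⟩
  · induction e using Sym2.ind with
    | _ a b =>
      have hab : G'.Adj a b := mem_edgeFinset.mp he
      rcases a with u | x <;> rcases b with v | y
      · exact Or.inl (hf1 u v ((hT.adj_inl_inl u v).mp hab))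
      · exact Or.inr (hf2 u y ((hT.adj_inl_inr u y).mp hab))
      · exact Or.inr (hf2' x v hab)
      · exact absurd hab (hT.not_adj_inr_inr x y)
  · rcases a with u | x <;> rcases b with v | y
    · rw [hV, hV, hf1 u v ((hT.adj_inl_inl u v).mp hab)]; norm_num
    · rw [hV, hE, hf2 u y ((hT.adj_inl_inr u y).mp hab)]; norm_num
    · rw [hE, hV, hf2' x v hab]; norm_num
    · exact absurd hab (hT.not_adj_inr_inr x y)

end IsTriangulation

end

theorem stmt14_general {V : Type*} [Fintype V] [DecidableEq V]
    (G C : SimpleGraph V) (hCG : C ≤ G)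
    (hC2 : ∀ v, C.degree v = 2)
    (E' : Type*) [Fintype E'] [DecidableEq E'] (ι : E' → Sym2 V)
    (hinj : Function.Injective ι)
    (hmem : ∀ x, ι x ∈ G.edgeSet ∧ ι x ∉ C.edgeSet)
    (hsurj : ∀ e, e ∈ G.edgeSet → e ∉ C.edgeSet → ∃ x, ι x = e)
    (G' : SimpleGraph (V ⊕ E'))
    (hG'1 : ∀ u v : V, G'.Adj (Sum.inl u) (Sum.inl v) ↔ G.Adj u v)
    (hG'2 : ∀ (u : V) (x : E'), G'.Adj (Sum.inl u) (Sum.inr x) ↔ u ∈ ι x)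
    (hG'3 : ∀ x y : E', ¬ G'.Adj (Sum.inr x) (Sum.inr y))
    (f : Sym2 (V ⊕ E') → ℤ)
    (hf1 : ∀ u v : V, G.Adj u v → f s(Sum.inl u, Sum.inl v) = 1)
    (hf2 : ∀ (u : V) (x : E'), u ∈ ι x → f s(Sum.inl u, Sum.inr x) = -1) :
    IsSEDF G' f ∧
      ∑ e ∈ G'.edgeFinset, f e
        = 2 * (Fintype.card V : ℤ) - G.edgeFinset.card ∧
      ∑ e ∈ G'.edgeFinset, f e
        = 2 * (Fintype.card (V ⊕ E') : ℤ) - G'.edgeFinset.card := by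
  have hT : IsTriangulation G ι G' := ⟨hG'1, hG'2, hG'3⟩
  have hι : ∀ x, ¬(ι x).IsDiag := fun x => G.not_isDiag_of_mem_edgeSet (hmem x).1
  have hV : ∀ v, vweight G' f (Sum.inl v) = 2 := fun v => by
    rw [hT.vweight_inl hf1 hf2, ← card_filter_mem_add_degree hCG hinj hmem hsurj v, hC2]
    push_cast
    ring
  have hE : ∀ x, vweight G' f (Sum.inr x) = -2 := fun x => hT.vweight_inr hf2 (hι x)
  have hm : Fintype.card E' + Fintype.card V = #G.edgeFinset := by
    rw [← card_edgeFinset_of_degree_eq_two C hC2, card_add_card_edgeFinset hCG hinj hmem hsurj]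
  have htotal : 2 * ∑ e ∈ G'.edgeFinset, f e = 2 * Fintype.card V - 2 * Fintype.card E' := by
    rw [← sum_vweight, Fintype.sum_sum_type]
    simp only [hV, hE, sum_const, card_univ, nsmul_eq_mul]
    ring
  have hcard := hT.card_edgeFinset hι
  refine ⟨hT.isSEDF_of_vweight hf1 hf2 hV hE, by omega, ?_⟩
  rw [Fintype.card_sum]
  push_cast
  omega

/-- let `C` be a Hamiltonian cycle of `G` (a spanning connected
2-regular subgraph), `δ(G) ≥ 3`, and let `G'` be obtained from `G` by adding, for each
edge `e = uv ∉ E(C)`, a new vertex `w_e` adjacent to `u` and `v` (the triangulation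
`T(G - E(C)) + E(C)`, keeping all edges of `G`). Assigning `+1` to the edges of `G`
and `-1` to the new edges gives an SEDF of `G'` of total weight
`2n - m = 2|V(G')| - |E(G')|`. -/
theorem stmt14 {V : Type*} [Fintype V] [DecidableEq V]
    (G C : SimpleGraph V) (hCG : C ≤ G)
    (hC2 : ∀ v, C.degree v = 2) (hCconn : C.Connected)
    (hδ : ∀ v, 3 ≤ G.degree v)
    (E' : Type*) [Fintype E'] [DecidableEq E'] (ι : E' → Sym2 V)
    (hinj : Function.Injective ι)
    (hmem : ∀ x, ι x ∈ G.edgeSet ∧ ι x ∉ C.edgeSet)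
    (hsurj : ∀ e, e ∈ G.edgeSet → e ∉ C.edgeSet → ∃ x, ι x = e)
    (G' : SimpleGraph (V ⊕ E'))
    (hG'1 : ∀ u v : V, G'.Adj (Sum.inl u) (Sum.inl v) ↔ G.Adj u v)
    (hG'2 : ∀ (u : V) (x : E'), G'.Adj (Sum.inl u) (Sum.inr x) ↔ u ∈ ι x)
    (hG'3 : ∀ x y : E', ¬ G'.Adj (Sum.inr x) (Sum.inr y))
    (f : Sym2 (V ⊕ E') → ℤ)
    (hf1 : ∀ u v : V, G.Adj u v → f s(Sum.inl u, Sum.inl v) = 1)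
    (hf2 : ∀ (u : V) (x : E'), u ∈ ι x → f s(Sum.inl u, Sum.inr x) = -1) :
    IsSEDF G' f ∧
      ∑ e ∈ G'.edgeFinset, f e
        = 2 * (Fintype.card V : ℤ) - G.edgeFinset.card ∧
      ∑ e ∈ G'.edgeFinset, f e
        = 2 * (Fintype.card (V ⊕ E') : ℤ) - G'.edgeFinset.card :=
  stmt14_general G C hCG hC2 E' ι hinj hmem hsurj G' hG'1 hG'2 hG'3 f hf1 hf2
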